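/- Let p₁ ∈ ℂ[t] be monic of degree d₁ − 1 with d₁ ≥ 1, let p̂₁(t) = t^{d₁−1}p₁(1/t), and let R = ℂ[x₁,x₂,y₁,y₂]/(y₁x₁^{d₁} − x₂ + p̂₁(x₁), y₂x₂ − x₁ + 1). Then the localization of R at the element x₁·y₂ is isomorphic as a ℂ-algebra to the Laurent polynomial ring ℂ[v₁^{±1}, v₂^{±1}], via the map x₁ ↦ v₁, x₂ ↦ (v₁ − 1)·v₂^{−1}, y₁ ↦ (v₁ − 1 − p̂₁(v₁)·v₂)·(v₁^{d₁}·v₂)^{−1}, y₂ ↦ v₂, whose inverse sends v₁ ↦ x₁ and v₂ ↦ y₂. -/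

import Mathlib

open MvPolynomial AddMonoidAlgebra

noncomputable section

/-- Relations of the coordinate ring of `S_{p₁,1}`: variables `x₁ = X 0`, `x₂ = X 1`,
`y₁ = X 2`, `y₂ = X 3`; `p̂₁` is `p₁.reverse`. -/
abbrev srel₁ (p₁ : Polynomial ℂ) (d₁ : ℕ) : Set (MvPolynomial (Fin 4) ℂ) :=
  {X 2 * X 0 ^ d₁ - X 1 + Polynomial.aeval (X 0) p₁.reverse,
   X 3 * X 1 - X 0 + 1}

/-- The coordinate ring of `S_{p₁,1}`. -/
abbrev SRing₁ (p₁ : Polynomial ℂ) (d₁ : ℕ) : Type :=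
  MvPolynomial (Fin 4) ℂ ⧸ Ideal.span (srel₁ p₁ d₁)

/-- The Laurent polynomial ring `ℂ[v₁^{±1}, v₂^{±1}]`; `v₁^a·v₂^b = single (a,b) 1`. -/
abbrev Laurent2 : Type := AddMonoidAlgebra ℂ (ℤ × ℤ)

/-! On the open set `x₁ y₂ ≠ 0` both `x₁` and `y₂` are invertible, and the two relations can be
solved for the other coordinates: `x₂ = (x₁ - 1) y₂⁻¹` and `y₁ = (x₂ - p̂₁(x₁)) x₁^{-d₁}`.
Hence `(x₁, y₂)` are coordinates identifying the open set with `ℂ* × ℂ*`. Algebraically,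
substituting these formulas kills the relations and inverts `x₁ y₂`, so it defines a map to the
Laurent ring; `v₁ ↦ x₁`, `v₂ ↦ y₂` defines a map back, and both composites fix generators. -/

namespace AddMonoidAlgebra

variable {R A : Type*} [CommSemiring R] [CommSemiring A] [Algebra R A]

theorem isUnit_single_one {G : Type*} [AddGroup G] (z : G) : IsUnit (single z 1 : R[G]) :=
  ((of R G).toHomUnits (.ofAdd z)).isUnit

theorem single_one_eq_zpow_mul_zpow (m n : ℤ) :
    (single (m, n) 1 : R[ℤ × ℤ]) =
      ↑((of R (ℤ × ℤ)).toHomUnits (.ofAdd (1, 0)) ^ m *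
        (of R (ℤ × ℤ)).toHomUnits (.ofAdd (0, 1)) ^ n) := by
  rw [← map_zpow (of R (ℤ × ℤ)).toHomUnits, ← map_zpow (of R (ℤ × ℤ)).toHomUnits,
    ← map_mul, MonoidHom.coe_toHomUnits, of_apply]
  congr <;> simp [toAdd_zpow]

theorem algHom_ext_int_prod {f g : R[ℤ × ℤ] →ₐ[R] A}
    (h₁ : f (single (1, 0) 1) = g (single (1, 0) 1))
    (h₂ : f (single (0, 1) 1) = g (single (0, 1) 1)) : f = g := by
  refine algHom_ext (fun ⟨m, n⟩ => ?_) (Subsingleton.elim _ _)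
  have hmap : ∀ {u : R[ℤ × ℤ]ˣ}, f u = g u →
      Units.map (f : R[ℤ × ℤ] →* A) u = Units.map (g : R[ℤ × ℤ] →* A) u :=
    fun h => Units.ext h
  rw [single_one_eq_zpow_mul_zpow, ← MonoidHom.coe_coe f, ← MonoidHom.coe_coe g,
    ← Units.coe_map, ← Units.coe_map, map_mul, map_mul, map_zpow, map_zpow, map_zpow,
    map_zpow, hmap h₁, hmap h₂]

def liftUnits (u v : Aˣ) : R[ℤ × ℤ] →ₐ[R] A :=
  lift R A (ℤ × ℤ) <| (Units.coeHom A).comp <|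
    ((zpowersHom Aˣ u).coprod (zpowersHom Aˣ v)).comp
      (MulEquiv.prodMultiplicative (G := ℤ) (H := ℤ)).toMonoidHom

theorem liftUnits_single (u v : Aˣ) (m n : ℤ) :
    liftUnits (R := R) u v (single (m, n) 1) = ↑(u ^ m * v ^ n) := by
  simp [liftUnits]

end AddMonoidAlgebra

/-- `srel₁` over any commutative ring, with an arbitrary polynomial `q` in place of `p̂₁`. -/
def surfaceRel {R : Type*} [CommRing R] (q : Polynomial R) (d : ℕ) :
    Set (MvPolynomial (Fin 4) R) :=
  {X 2 * X 0 ^ d - X 1 + Polynomial.aeval (X 0) q, X 3 * X 1 - X 0 + 1}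

abbrev SurfaceLoc {R : Type*} [CommRing R] (q : Polynomial R) (d : ℕ) : Type _ :=
  Localization.Away (Ideal.Quotient.mk (Ideal.span (surfaceRel q d)) (X 0 * X 3))

namespace SurfaceLoc

variable {R : Type*} [CommRing R] (q : Polynomial R) (d : ℕ)

def ofMvPolynomial : MvPolynomial (Fin 4) R →ₐ[R] SurfaceLoc q d :=
  (IsScalarTower.toAlgHom R _ _).comp (Ideal.Quotient.mkₐ R (Ideal.span (surfaceRel q d)))

local notation "x" => fun i => ofMvPolynomial q d (X i)

theorem ofMvPolynomial_eq_zero {r : MvPolynomial (Fin 4) R} (hr : r ∈ surfaceRel q d) :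
    ofMvPolynomial q d r = 0 := by
  simp [ofMvPolynomial, Ideal.Quotient.eq_zero_iff_mem.2 (Ideal.subset_span hr)]

theorem rel₁ : x 2 * x 0 ^ d - x 1 + Polynomial.aeval (x 0) q = 0 := by
  simpa [← Polynomial.aeval_algHom_apply] using
    ofMvPolynomial_eq_zero q d (Or.inl rfl : _ ∈ surfaceRel q d)

theorem rel₂ : x 3 * x 1 - x 0 + 1 = 0 := by
  simpa using ofMvPolynomial_eq_zero q d (Or.inr rfl : _ ∈ surfaceRel q d)

theorem isUnit_X_zero_mul_X_three : IsUnit (x 0 * x 3) := by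
  rw [← map_mul]
  exact IsLocalization.Away.algebraMap_isUnit (Ideal.Quotient.mk (Ideal.span (surfaceRel q d)) _)

def unitX₀ : (SurfaceLoc q d)ˣ :=
  (isUnit_of_mul_isUnit_left (isUnit_X_zero_mul_X_three q d)).unit

def unitX₃ : (SurfaceLoc q d)ˣ :=
  (isUnit_of_mul_isUnit_right (isUnit_X_zero_mul_X_three q d)).unit

@[simp] theorem val_unitX₀ : (unitX₀ q d : SurfaceLoc q d) = x 0 := IsUnit.unit_spec _

@[simp] theorem val_unitX₃ : (unitX₃ q d : SurfaceLoc q d) = x 3 := IsUnit.unit_spec _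

/-- With `x₁ = v₁ = single (1, 0) 1` and `y₂ = v₂ = single (0, 1) 1` invertible, the two
relations solve uniquely for `x₂` and `y₁`. -/
def torusCoords : Fin 4 → R[ℤ × ℤ] :=
  ![single (1, 0) 1,
    (single (1, 0) 1 - 1) * single (0, -1) 1,
    (single (1, 0) 1 - 1 - Polynomial.aeval (single (1, 0) 1 : R[ℤ × ℤ]) q * single (0, 1) 1) *
      single (-(d : ℤ), -1) 1,
    single (0, 1) 1]

theorem span_surfaceRel_le_ker :
    Ideal.span (surfaceRel q d) ≤ RingHom.ker (aeval (torusCoords q d)) := by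
  refine Ideal.span_le.2 ?_
  have hv₂ : (single (0, 1) 1 : R[ℤ × ℤ]) * single (0, -1) 1 = 1 := by
    rw [single_mul_single, AddMonoidAlgebra.one_def]; norm_num [Prod.mk_zero_zero]
  rintro r (rfl | rfl) <;> rw [SetLike.mem_coe, RingHom.mem_ker]
  · have hv : (single (-(d : ℤ), -1) 1 : R[ℤ × ℤ]) * single (1, 0) 1 ^ d =
        single (0, -1) 1 := by
      rw [single_pow, single_mul_single]; norm_num
    simp only [map_add, map_sub, map_mul, map_pow, aeval_X, ← Polynomial.aeval_algHom_apply,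
      torusCoords, Matrix.cons_val]
    linear_combination (single (1, 0) (1 : R) - 1 -
      Polynomial.aeval (single (1, 0) 1 : R[ℤ × ℤ]) q * single (0, 1) 1) * hv -
      Polynomial.aeval (single (1, 0) 1 : R[ℤ × ℤ]) q * hv₂
  · simp only [map_add, map_sub, map_mul, map_one, aeval_X, torusCoords, Matrix.cons_val]
    linear_combination (single (1, 0) (1 : R) - 1) * hv₂

def quotientToTorus :
    MvPolynomial (Fin 4) R ⧸ Ideal.span (surfaceRel q d) →ₐ[R] R[ℤ × ℤ] :=
  Ideal.Quotient.liftₐ _ (aeval (torusCoords q d)) fun _ hr =>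
    span_surfaceRel_le_ker q d hr

theorem isUnit_quotientToTorus :
    IsUnit (quotientToTorus q d (Ideal.Quotient.mk (Ideal.span (surfaceRel q d)) (X 0 * X 3))) := by
  change IsUnit (aeval (torusCoords q d) (X 0 * X 3))
  rw [map_mul, aeval_X, aeval_X]
  exact (isUnit_single_one _).mul (isUnit_single_one _)

def toTorus : SurfaceLoc q d →ₐ[R] R[ℤ × ℤ] :=
  IsLocalization.Away.liftAlgHom _ (isUnit_quotientToTorus q d)

theorem toTorus_ofMvPolynomial (p : MvPolynomial (Fin 4) R) :
    toTorus q d (ofMvPolynomial q d p) = aeval (torusCoords q d) p :=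
  IsLocalization.Away.lift_eq (S := SurfaceLoc q d) _ (isUnit_quotientToTorus q d) _

def ofTorus : R[ℤ × ℤ] →ₐ[R] SurfaceLoc q d := liftUnits (unitX₀ q d) (unitX₃ q d)

theorem ofTorus_single (m n : ℤ) :
    ofTorus q d (single (m, n) 1) = ↑(unitX₀ q d ^ m * unitX₃ q d ^ n) :=
  liftUnits_single _ _ m n

theorem ofTorus_torusCoords (i : Fin 4) : ofTorus q d (torusCoords q d i) = x i := by
  fin_cases i
  · simpa [torusCoords] using ofTorus_single q d 1 0
  · change ofTorus q d ((single (1, 0) 1 - 1) * single (0, -1) 1) = x 1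
    rw [map_mul, map_sub, map_one, ofTorus_single, ofTorus_single]
    simp only [zpow_one, zpow_zero, mul_one, one_mul, zpow_neg, val_unitX₀]
    rw [Units.mul_inv_eq_iff_eq_mul, val_unitX₃]
    linear_combination -rel₂ q d
  · change ofTorus q d ((single (1, 0) 1 - 1 -
      Polynomial.aeval (single (1, 0) 1 : R[ℤ × ℤ]) q * single (0, 1) 1) *
        single (-(d : ℤ), -1) 1) = x 2
    simp only [map_mul, map_sub, map_one, ← Polynomial.aeval_algHom_apply, ofTorus_single]
    have hinv : unitX₀ q d ^ (-(d : ℤ)) * unitX₃ q d ^ (-1 : ℤ) =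
        (unitX₀ q d ^ d * unitX₃ q d)⁻¹ := by
      rw [zpow_neg, zpow_neg, zpow_one, zpow_natCast, mul_inv]
    rw [hinv, Units.mul_inv_eq_iff_eq_mul]
    simp only [zpow_one, zpow_zero, mul_one, one_mul, Units.val_mul, Units.val_pow_eq_pow_val,
      val_unitX₀, val_unitX₃]
    linear_combination (-x 3) * rel₁ q d - rel₂ q d
  · simpa [torusCoords] using ofTorus_single q d 0 1

theorem ofTorus_single_one_zero : ofTorus q d (single (1, 0) 1) = x 0 :=
  ofTorus_torusCoords q d 0

theorem ofTorus_single_zero_one : ofTorus q d (single (0, 1) 1) = x 3 :=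
  ofTorus_torusCoords q d 3

theorem toTorus_X (i : Fin 4) : toTorus q d (x i) = torusCoords q d i := by
  rw [toTorus_ofMvPolynomial, aeval_X]

theorem toTorus_comp_ofTorus : (toTorus q d).comp (ofTorus q d) = AlgHom.id R R[ℤ × ℤ] :=
  algHom_ext_int_prod (by simp [ofTorus_single_one_zero, toTorus_X, torusCoords])
    (by simp [ofTorus_single_zero_one, toTorus_X, torusCoords])

theorem ofTorus_comp_toTorus :
    (ofTorus q d).comp (toTorus q d) = AlgHom.id R (SurfaceLoc q d) := by
  refine IsLocalization.algHom_ext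
    (Submonoid.powers (Ideal.Quotient.mk (Ideal.span (surfaceRel q d)) (X 0 * X 3))) <|
    Ideal.Quotient.algHom_ext R <| MvPolynomial.algHom_ext fun i => ?_
  exact (congrArg (ofTorus q d) (toTorus_X q d i)).trans (ofTorus_torusCoords q d i)

def equivTorus : SurfaceLoc q d ≃ₐ[R] R[ℤ × ℤ] :=
  .ofAlgHom (toTorus q d) (ofTorus q d) (toTorus_comp_ofTorus q d) (ofTorus_comp_toTorus q d)

end SurfaceLoc

theorem stmt_14_general (p₁ : Polynomial ℂ)
    (d₁ : ℕ) :
    ∃ e : Localization.Away (Ideal.Quotient.mk (Ideal.span (srel₁ p₁ d₁)) (X 0 * X 3))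
        ≃ₐ[ℂ] Laurent2,
      -- x₁ ↦ v₁
      e (algebraMap (SRing₁ p₁ d₁) _ (Ideal.Quotient.mk _ (X 0))) =
        single ((1 : ℤ), (0 : ℤ)) 1 ∧
      -- x₂ ↦ (v₁ − 1)·v₂⁻¹
      e (algebraMap (SRing₁ p₁ d₁) _ (Ideal.Quotient.mk _ (X 1))) =
        (single ((1 : ℤ), (0 : ℤ)) 1 - 1) * single ((0 : ℤ), (-1 : ℤ)) 1 ∧
      -- y₁ ↦ (v₁ − 1 − p̂₁(v₁)·v₂)·(v₁^{d₁}·v₂)⁻¹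
      e (algebraMap (SRing₁ p₁ d₁) _ (Ideal.Quotient.mk _ (X 2))) =
        (single ((1 : ℤ), (0 : ℤ)) 1 - 1 -
          Polynomial.aeval (single ((1 : ℤ), (0 : ℤ)) 1 : Laurent2) p₁.reverse *
            single ((0 : ℤ), (1 : ℤ)) 1) * single (-(d₁ : ℤ), (-1 : ℤ)) 1 ∧
      -- y₂ ↦ v₂
      e (algebraMap (SRing₁ p₁ d₁) _ (Ideal.Quotient.mk _ (X 3))) =
        single ((0 : ℤ), (1 : ℤ)) 1 ∧
      -- inverse: v₁ ↦ x₁, v₂ ↦ y₂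
      e.symm (single ((1 : ℤ), (0 : ℤ)) 1) =
        algebraMap (SRing₁ p₁ d₁) _ (Ideal.Quotient.mk _ (X 0)) ∧
      e.symm (single ((0 : ℤ), (1 : ℤ)) 1) =
        algebraMap (SRing₁ p₁ d₁) _ (Ideal.Quotient.mk _ (X 3)) :=
  ⟨SurfaceLoc.equivTorus p₁.reverse d₁,
    SurfaceLoc.toTorus_X _ _ 0, SurfaceLoc.toTorus_X _ _ 1, SurfaceLoc.toTorus_X _ _ 2,
    SurfaceLoc.toTorus_X _ _ 3, SurfaceLoc.ofTorus_single_one_zero _ _,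
    SurfaceLoc.ofTorus_single_zero_one _ _⟩

theorem stmt_14 (p₁ : Polynomial ℂ) (hm₁ : p₁.Monic)
    (d₁ : ℕ) (hd₁ : d₁ = p₁.natDegree + 1) :
    ∃ e : Localization.Away (Ideal.Quotient.mk (Ideal.span (srel₁ p₁ d₁)) (X 0 * X 3))
        ≃ₐ[ℂ] Laurent2,
      -- x₁ ↦ v₁
      e (algebraMap (SRing₁ p₁ d₁) _ (Ideal.Quotient.mk _ (X 0))) =
        single ((1 : ℤ), (0 : ℤ)) 1 ∧
      -- x₂ ↦ (v₁ − 1)·v₂⁻¹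
      e (algebraMap (SRing₁ p₁ d₁) _ (Ideal.Quotient.mk _ (X 1))) =
        (single ((1 : ℤ), (0 : ℤ)) 1 - 1) * single ((0 : ℤ), (-1 : ℤ)) 1 ∧
      -- y₁ ↦ (v₁ − 1 − p̂₁(v₁)·v₂)·(v₁^{d₁}·v₂)⁻¹
      e (algebraMap (SRing₁ p₁ d₁) _ (Ideal.Quotient.mk _ (X 2))) =
        (single ((1 : ℤ), (0 : ℤ)) 1 - 1 -
          Polynomial.aeval (single ((1 : ℤ), (0 : ℤ)) 1 : Laurent2) p₁.reverse *
            single ((0 : ℤ), (1 : ℤ)) 1) * single (-(d₁ : ℤ), (-1 : ℤ)) 1 ∧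
      -- y₂ ↦ v₂
      e (algebraMap (SRing₁ p₁ d₁) _ (Ideal.Quotient.mk _ (X 3))) =
        single ((0 : ℤ), (1 : ℤ)) 1 ∧
      -- inverse: v₁ ↦ x₁, v₂ ↦ y₂
      e.symm (single ((1 : ℤ), (0 : ℤ)) 1) =
        algebraMap (SRing₁ p₁ d₁) _ (Ideal.Quotient.mk _ (X 0)) ∧
      e.symm (single ((0 : ℤ), (1 : ℤ)) 1) =
        algebraMap (SRing₁ p₁ d₁) _ (Ideal.Quotient.mk _ (X 3)) :=
  stmt_14_general p₁ d₁
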